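/- arXiv:1112.5087 — 2 statements merged into one kernel-verified Lean document; each statement's English description precedes it below -/
import Mathlib

section
/- Let μ be a Borel probability measure on ℝ with m_8(μ) < ∞, m_1(μ) = 0 and m_2(μ) = 1, and let T_n^{(-1)}(z) = z − ((n−1)/√n) ∫_{|u| ≤ √(n−1)/π} (u − z√n)^{-1} τ(du) be the inverse function of T_n. Then there exist c(μ) > 0 and n₁ = n₁(μ) ∈ ℕ such that for all n ≥ n₁ and all z₁, z₂ ∈ T_n(ℂ⁺): |T_n^{(-1)}(z₁) − T_n^{(-1)}(z₂)| ≤ c(μ) |z₁ − z₂|. -/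
/-!
Write `v = W(√n w)` and `r(v) = ∫_{|u| ≤ √(n-1)/π} |u - v|⁻² dτ`. Taking imaginary parts in the
subordination equation `√n w = n v - (n - 1) F_{μ*}(v)` gives `Im (√n w) = Im v · (1 - (n - 1) r(v))`,
so `(n - 1) r(v) < 1` on the image of `T_n`. The difference quotient of `T_n^{(-1)}` at two such
points is `1 - (n - 1) ∫ (u - v₁)⁻¹ (u - v₂)⁻¹ dτ`, whose modulus is at most
`1 + (n - 1) (r(v₁) + r(v₂)) / 2 ≤ 2` by the arithmetic–geometric mean inequality.
-/

open MeasureTheory Complex Filter Set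
open scoped Topology

noncomputable section

namespace FreeCLT

def mom (μ : Measure ℝ) (k : ℕ) : ℝ := ∫ u, u ^ k ∂μ

def cauchy (μ : Measure ℝ) (z : ℂ) : ℂ := ∫ u, (z - (u : ℂ))⁻¹ ∂μ

def recip (μ : Measure ℝ) (z : ℂ) : ℂ := (cauchy μ z)⁻¹

def MemF (F : ℂ → ℂ) : Prop :=
  ∃ ν : Measure ℝ, IsProbabilityMeasure ν ∧ ∀ z : ℂ, 0 < z.im → F z = recip ν z

def Subord (μ : Measure ℝ) (n : ℕ) (Z : ℂ → ℂ) : Prop :=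
  MemF Z ∧ ∀ z : ℂ, 0 < z.im →
    z = (n : ℂ) * Z z - ((n : ℂ) - 1) * recip μ (Z z)

def IsBoxPow (μ : Measure ℝ) (n : ℕ) (Z : ℂ → ℂ) (ν : Measure ℝ) : Prop :=
  Subord μ n Z ∧ IsProbabilityMeasure ν ∧
    ∀ z : ℂ, 0 < z.im → recip ν z = recip μ (Z z)

def rescale (n : ℕ) (ν : Measure ℝ) : Measure ℝ :=
  ν.map (fun x => x / Real.sqrt n)

def HasDensity (ν : Measure ℝ) (p : ℝ → ℝ) : Prop :=
  Continuous p ∧ (∀ x, 0 ≤ p x) ∧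
    ν = MeasureTheory.volume.withDensity (fun x => ENNReal.ofReal (p x))

def aQ (μ : Measure ℝ) (n : ℕ) : ℝ := mom μ 3 / Real.sqrt n
def bQ (μ : Measure ℝ) (n : ℕ) : ℝ := (mom μ 4 - (mom μ 3) ^ 2 - 1) / n
def dQ (μ : Measure ℝ) (n : ℕ) : ℝ := (mom μ 4 - (mom μ 3) ^ 2) / n
def eQ (μ : Measure ℝ) (n : ℕ) : ℝ := (1 - bQ μ n) / Real.sqrt (1 - dQ μ n)

def pw (x : ℝ) : ℝ := (1 / (2 * Real.pi)) * Real.sqrt (max (4 - x ^ 2) 0)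

def truncSet (n : ℕ) : Set ℝ := {u : ℝ | |u| ≤ Real.sqrt ((n : ℝ) - 1) / Real.pi}

def Tfun (W : ℕ → ℂ → ℂ) (n : ℕ) (z : ℂ) : ℂ :=
  W n ((Real.sqrt (n : ℝ) : ℂ) * z) / (Real.sqrt (n : ℝ) : ℂ)

def Tinv (τ : Measure ℝ) (n : ℕ) (z : ℂ) : ℂ :=
  z - (((n : ℂ) - 1) / (Real.sqrt (n : ℝ) : ℂ)) *
    ∫ u in truncSet n, ((u : ℂ) - z * (Real.sqrt (n : ℝ) : ℂ))⁻¹ ∂τ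

def Sinv (τ : Measure ℝ) (n : ℕ) (z : ℂ) : ℂ :=
  z - (((n : ℂ) - 1) / (Real.sqrt (n : ℝ) : ℂ)) *
    ∫ u, ((u : ℂ) - z * (Real.sqrt (n : ℝ) : ℂ))⁻¹ ∂τ

section CauchyKernel

variable {ρ : Measure ℝ} {v v₁ v₂ : ℂ}

lemma ofReal_sub_ne_zero (hv : v.im ≠ 0) (u : ℝ) : (u : ℂ) - v ≠ 0 := fun h =>
  hv (by simpa using congrArg Complex.im h)

lemma norm_inv_ofReal_sub_le (hv : v.im ≠ 0) (u : ℝ) : ‖((u : ℂ) - v)⁻¹‖ ≤ |v.im|⁻¹ := by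
  rw [norm_inv]
  exact inv_anti₀ (abs_pos.mpr hv) (by simpa using Complex.abs_im_le_norm ((u : ℂ) - v))

lemma continuous_inv_ofReal_sub (hv : v.im ≠ 0) : Continuous fun u : ℝ => ((u : ℂ) - v)⁻¹ :=
  (continuous_ofReal.sub continuous_const).inv₀ (ofReal_sub_ne_zero hv)

lemma im_inv_ofReal_sub (u : ℝ) (v : ℂ) :
    ((u : ℂ) - v)⁻¹.im = v.im * ‖((u : ℂ) - v)⁻¹‖ ^ 2 := by
  rw [Complex.inv_im, norm_inv, inv_pow, ← Complex.normSq_eq_norm_sq]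
  simp [div_eq_mul_inv]

variable [IsFiniteMeasure ρ]

lemma integrable_inv_ofReal_sub (hv : v.im ≠ 0) :
    Integrable (fun u : ℝ => ((u : ℂ) - v)⁻¹) ρ :=
  .of_bound (continuous_inv_ofReal_sub hv).aestronglyMeasurable _
    (ae_of_all _ (norm_inv_ofReal_sub_le hv))

lemma integrable_norm_inv_ofReal_sub_sq (hv : v.im ≠ 0) :
    Integrable (fun u : ℝ => ‖((u : ℂ) - v)⁻¹‖ ^ 2) ρ :=
  .of_bound ((continuous_inv_ofReal_sub hv).norm.pow 2).aestronglyMeasurable (|v.im|⁻¹ ^ 2)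
    (ae_of_all _ fun u => by
      rw [norm_pow, norm_norm]
      gcongr
      exact norm_inv_ofReal_sub_le hv u)

lemma im_integral_inv_ofReal_sub (hv : v.im ≠ 0) :
    (∫ u, ((u : ℂ) - v)⁻¹ ∂ρ).im = v.im * ∫ u, ‖((u : ℂ) - v)⁻¹‖ ^ 2 ∂ρ := by
  have h := integral_im (integrable_inv_ofReal_sub (ρ := ρ) hv)
  simp only [RCLike.im_to_complex, im_inv_ofReal_sub] at h
  rw [← h, integral_const_mul]

lemma integral_norm_inv_ofReal_sub_sq_pos [NeZero ρ] (hv : v.im ≠ 0) :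
    0 < ∫ u, ‖((u : ℂ) - v)⁻¹‖ ^ 2 ∂ρ := by
  rw [integral_pos_iff_support_of_nonneg (fun u => by positivity)
    (integrable_norm_inv_ofReal_sub_sq hv)]
  have hsupp : Function.support (fun u : ℝ => ‖((u : ℂ) - v)⁻¹‖ ^ 2) = univ := by
    ext u
    simp [ofReal_sub_ne_zero hv u]
  rw [hsupp]
  exact Measure.measure_univ_pos.mpr (NeZero.ne ρ)

lemma integral_inv_ofReal_sub_sub_integral (hv₁ : v₁.im ≠ 0) (hv₂ : v₂.im ≠ 0) :
    ∫ u, ((u : ℂ) - v₁)⁻¹ ∂ρ - ∫ u, ((u : ℂ) - v₂)⁻¹ ∂ρ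
      = (v₁ - v₂) * ∫ u, ((u : ℂ) - v₁)⁻¹ * ((u : ℂ) - v₂)⁻¹ ∂ρ := by
  rw [← integral_sub (integrable_inv_ofReal_sub hv₁) (integrable_inv_ofReal_sub hv₂),
    ← integral_const_mul]
  congr 1 with u
  field_simp [ofReal_sub_ne_zero hv₁ u, ofReal_sub_ne_zero hv₂ u]
  ring

lemma norm_integral_inv_mul_inv_le (hv₁ : v₁.im ≠ 0) (hv₂ : v₂.im ≠ 0) :
    ‖∫ u, ((u : ℂ) - v₁)⁻¹ * ((u : ℂ) - v₂)⁻¹ ∂ρ‖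
      ≤ (∫ u, ‖((u : ℂ) - v₁)⁻¹‖ ^ 2 ∂ρ + ∫ u, ‖((u : ℂ) - v₂)⁻¹‖ ^ 2 ∂ρ) / 2 := by
  have h₁ := integrable_norm_inv_ofReal_sub_sq (ρ := ρ) hv₁
  have h₂ := integrable_norm_inv_ofReal_sub_sq (ρ := ρ) hv₂
  rw [← integral_add h₁ h₂, ← integral_div]
  refine norm_integral_le_of_norm_le ((h₁.add h₂).div_const 2) (ae_of_all _ fun u => ?_)
  rw [norm_mul]
  linarith [two_mul_le_add_sq ‖((u : ℂ) - v₁)⁻¹‖ ‖((u : ℂ) - v₂)⁻¹‖]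

/-- The map `v ↦ v - a ∫ (u - v)⁻¹ dρ` is `2`-Lipschitz between points where
`a ∫ |u - v|⁻² dρ ≤ 1`: its difference quotient is `1 - a ∫ (u - v₁)⁻¹ (u - v₂)⁻¹ dρ`. -/
lemma norm_sub_mul_integral_inv_sub_le {a : ℝ} (ha : 0 ≤ a) (hv₁ : v₁.im ≠ 0)
    (hv₂ : v₂.im ≠ 0) (h₁ : a * ∫ u, ‖((u : ℂ) - v₁)⁻¹‖ ^ 2 ∂ρ ≤ 1)
    (h₂ : a * ∫ u, ‖((u : ℂ) - v₂)⁻¹‖ ^ 2 ∂ρ ≤ 1) :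
    ‖(v₁ - a * ∫ u, ((u : ℂ) - v₁)⁻¹ ∂ρ) - (v₂ - a * ∫ u, ((u : ℂ) - v₂)⁻¹ ∂ρ)‖
      ≤ 2 * ‖v₁ - v₂‖ := by
  set J := ∫ u, ((u : ℂ) - v₁)⁻¹ * ((u : ℂ) - v₂)⁻¹ ∂ρ
  have hJ : a * ‖J‖ ≤ 1 := by
    have := mul_le_mul_of_nonneg_left (norm_integral_inv_mul_inv_le (ρ := ρ) hv₁ hv₂) ha
    linarith
  have hfactor : ‖1 - (a : ℂ) * J‖ ≤ 2 := calc
    ‖1 - (a : ℂ) * J‖ ≤ 1 + a * ‖J‖ := by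
      simpa [norm_mul, abs_of_nonneg ha] using norm_sub_le (1 : ℂ) (a * J)
    _ ≤ 2 := by linarith
  calc ‖(v₁ - a * ∫ u, ((u : ℂ) - v₁)⁻¹ ∂ρ) - (v₂ - a * ∫ u, ((u : ℂ) - v₂)⁻¹ ∂ρ)‖
      = ‖v₁ - v₂‖ * ‖1 - (a : ℂ) * J‖ := by
        rw [← norm_mul, mul_sub, mul_one, ← mul_assoc, mul_comm _ (a : ℂ), mul_assoc,
          ← integral_inv_ofReal_sub_sub_integral hv₁ hv₂]
        ring_nf
    _ ≤ 2 * ‖v₁ - v₂‖ := by nlinarith [norm_nonneg (v₁ - v₂)]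

end CauchyKernel

lemma cauchy_eq_neg_integral (ν : Measure ℝ) (z : ℂ) :
    cauchy ν z = -∫ u, ((u : ℂ) - z)⁻¹ ∂ν := by
  rw [cauchy, ← integral_neg]
  congr 1 with u
  rw [← inv_neg, neg_sub]

lemma im_recip_pos (ν : Measure ℝ) [IsFiniteMeasure ν] [NeZero ν] {z : ℂ} (hz : 0 < z.im) :
    0 < (recip ν z).im := by
  have hG : (cauchy ν z).im < 0 := by
    rw [cauchy_eq_neg_integral, neg_im, im_integral_inv_ofReal_sub hz.ne', neg_neg_iff_pos]
    exact mul_pos hz (integral_norm_inv_ofReal_sub_sq_pos hz.ne')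
  rw [recip, inv_im]
  exact div_pos (neg_pos.mpr hG) (normSq_pos.mpr fun h => by simp [h] at hG)

lemma MemF.im_pos {F : ℂ → ℂ} (hF : MemF F) {z : ℂ} (hz : 0 < z.im) : 0 < (F z).im := by
  obtain ⟨ν, _, hν⟩ := hF
  rw [hν z hz]
  exact im_recip_pos ν hz

/-- Taking imaginary parts in the subordination equation at `v = Z ζ` gives
`Im ζ = Im v · (1 - (n - 1) ∫ |u - v|⁻² dρ)`, and both imaginary parts are positive. -/
lemma Subord.sub_one_mul_integral_lt_one {μ ρ : Measure ℝ} [IsFiniteMeasure ρ] {n : ℕ}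
    {Z : ℂ → ℂ} (hZ : Subord μ n Z)
    (hμ : ∀ z : ℂ, 0 < z.im → recip μ z = z + ∫ u, ((u : ℂ) - z)⁻¹ ∂ρ)
    {ζ : ℂ} (hζ : 0 < ζ.im) :
    ((n : ℝ) - 1) * ∫ u, ‖((u : ℂ) - Z ζ)⁻¹‖ ^ 2 ∂ρ < 1 := by
  have hv := hZ.1.im_pos hζ
  have him := congrArg Complex.im (hZ.2 ζ hζ)
  rw [hμ _ hv] at him
  simp only [sub_im, mul_im, add_im, natCast_re, natCast_im, sub_re, one_re, one_im,
    im_integral_inv_ofReal_sub hv.ne'] at him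
  nlinarith

lemma norm_Tinv_sub_le (τ : Measure ℝ) [IsFiniteMeasure τ] {n : ℕ} (hn : 1 ≤ n) {z₁ z₂ : ℂ}
    (h₁ : 0 < (z₁ * (Real.sqrt n : ℂ)).im) (h₂ : 0 < (z₂ * (Real.sqrt n : ℂ)).im)
    (hr₁ : ((n : ℝ) - 1) *
      ∫ u in truncSet n, ‖((u : ℂ) - z₁ * (Real.sqrt n : ℂ))⁻¹‖ ^ 2 ∂τ ≤ 1)
    (hr₂ : ((n : ℝ) - 1) *
      ∫ u in truncSet n, ‖((u : ℂ) - z₂ * (Real.sqrt n : ℂ))⁻¹‖ ^ 2 ∂τ ≤ 1) :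
    ‖Tinv τ n z₁ - Tinv τ n z₂‖ ≤ 2 * ‖z₁ - z₂‖ := by
  have hn' : (1 : ℝ) ≤ n := by exact_mod_cast hn
  have hs : 0 < Real.sqrt n := Real.sqrt_pos.mpr (by linarith)
  have hTinv : ∀ z, Tinv τ n z = (z * (Real.sqrt n : ℂ) - (((n : ℝ) - 1 : ℝ) : ℂ) *
      ∫ u in truncSet n, ((u : ℂ) - z * (Real.sqrt n : ℂ))⁻¹ ∂τ) / (Real.sqrt n : ℂ) := by
    intro z
    have : (Real.sqrt n : ℂ) ≠ 0 := ofReal_ne_zero.mpr hs.ne'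
    rw [Tinv]
    push_cast
    field_simp
  rw [hTinv, hTinv, ← sub_div, norm_div, norm_real, Real.norm_of_nonneg hs.le, div_le_iff₀ hs]
  calc _ ≤ 2 * ‖z₁ * (Real.sqrt n : ℂ) - z₂ * (Real.sqrt n : ℂ)‖ :=
        norm_sub_mul_integral_inv_sub_le (by linarith) h₁.ne' h₂.ne' hr₁ hr₂
    _ = 2 * ‖z₁ - z₂‖ * Real.sqrt n := by
        rw [← sub_mul, norm_mul, norm_real, Real.norm_of_nonneg hs.le, mul_assoc]

theorem stmt_15_general
    (τ : Measure ℝ) [IsProbabilityMeasure τ]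
    (μs : ℕ → Measure ℝ)
    (hμs : ∀ n : ℕ, ∀ z : ℂ, 0 < z.im →
      recip (μs n) z = z + ∫ u in truncSet n, ((u : ℂ) - z)⁻¹ ∂τ)
    (W : ℕ → ℂ → ℂ) (νs : ℕ → Measure ℝ)
    (hboxW : ∀ n : ℕ, 1 ≤ n → IsBoxPow (μs n) n (W n) (νs n)) :
    ∃ c : ℝ, 0 < c ∧ ∃ n₁ : ℕ, ∀ n : ℕ, n₁ ≤ n → ∀ z₁ z₂ : ℂ,
      z₁ ∈ Tfun W n '' {z : ℂ | 0 < z.im} → z₂ ∈ Tfun W n '' {z : ℂ | 0 < z.im} →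
      ‖Tinv τ n z₁ - Tinv τ n z₂‖ ≤ c * ‖z₁ - z₂‖ := by
  refine ⟨2, two_pos, 1, fun n hn z₁ z₂ hz₁ hz₂ => ?_⟩
  have hZ := (hboxW n hn).1
  have hs : 0 < Real.sqrt n := Real.sqrt_pos.mpr (by exact_mod_cast hn)
  have hT : ∀ z ∈ Tfun W n '' {z : ℂ | 0 < z.im}, 0 < (z * (Real.sqrt n : ℂ)).im ∧
      ((n : ℝ) - 1) *
        ∫ u in truncSet n, ‖((u : ℂ) - z * (Real.sqrt n : ℂ))⁻¹‖ ^ 2 ∂τ ≤ 1 := by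
    rintro _ ⟨w, hw, rfl⟩
    have hsw : 0 < ((Real.sqrt n : ℂ) * w).im := by simpa using mul_pos hs hw
    rw [Tfun, div_mul_cancel₀ _ (ofReal_ne_zero.mpr hs.ne')]
    exact ⟨hZ.1.im_pos hsw, (hZ.sub_one_mul_integral_lt_one (hμs n) hsw).le⟩
  exact norm_Tinv_sub_le τ hn (hT z₁ hz₁).1 (hT z₂ hz₂).1 (hT z₁ hz₁).2 (hT z₂ hz₂).2

theorem stmt_15
    (μ : Measure ℝ) [IsProbabilityMeasure μ]
    (h8 : Integrable (fun u => u ^ 8) μ)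
    (h1 : mom μ 1 = 0) (h2 : mom μ 2 = 1)
    (τ : Measure ℝ) [IsProbabilityMeasure τ]
    (hτ : ∀ z : ℂ, 0 < z.im → recip μ z = z + ∫ u, ((u : ℂ) - z)⁻¹ ∂τ)
    (μs : ℕ → Measure ℝ) (hμsP : ∀ n : ℕ, IsProbabilityMeasure (μs n))
    (hμs : ∀ n : ℕ, ∀ z : ℂ, 0 < z.im →
      recip (μs n) z = z + ∫ u in truncSet n, ((u : ℂ) - z)⁻¹ ∂τ)
    (W : ℕ → ℂ → ℂ) (νs : ℕ → Measure ℝ)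
    (hboxW : ∀ n : ℕ, 1 ≤ n → IsBoxPow (μs n) n (W n) (νs n)) :
    ∃ c : ℝ, 0 < c ∧ ∃ n₁ : ℕ, ∀ n : ℕ, n₁ ≤ n → ∀ z₁ z₂ : ℂ,
      z₁ ∈ Tfun W n '' {z : ℂ | 0 < z.im} → z₂ ∈ Tfun W n '' {z : ℂ | 0 < z.im} →
      ‖Tinv τ n z₁ - Tinv τ n z₂‖ ≤ c * ‖z₁ - z₂‖ :=
  stmt_15_general τ μs hμs W νs hboxW

end FreeCLT
end
end

section
/- Let μ be a Borel probability measure on ℝ with m_8(μ) < ∞, m_1(μ) = 0 and m_2(μ) = 1, and let h = c₂(μ) n^{−3/2} and Î_n = {x ∈ ℝ : |x − a_n| ≤ 2/e_n − h}. Then there exist c(μ) > 0 and n₁ = n₁(μ) ∈ ℕ such that for all n ≥ n₁ and all x₁, x₂ ∈ Î_n: |T_n(x₁) − T_n(x₂)| ≤ c(μ) ( |x₁ − x₂| + n^{−3/2} ) / min_{j=1,2} √(4 − (e_n(x_j − a_n))²). -/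
open MeasureTheory Complex Filter Set
open scoped Topology

noncomputable section

namespace FreeCLT

/-!
The function `M_n` is explicit: `s = 2 (M_n - a_n) - (1 + b_n)(z - a_n)` is a square root of
`(1 - b_n)² (z - a_n)² - 4 (1 - d_n)`. Because `M_n ∈ 𝓕` satisfies `Im M_n(z) ≥ Im z`, this root lies
in the upper half-plane, and comparing real parts of `s²` gives
`Im s ≥ √(1 - d_n) · √(4 - (e_n (Re z - a_n))²)`. Hence `|s₁ + s₂|` is bounded below, and
`s₁² - s₂² = (s₁ - s₂)(s₁ + s₂)` makes `M_n` Lipschitz on horizontal lines, with constant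
`O(1 / min_j √(4 - (e_n (x_j - a_n))²))`. The expansion `T_n = M_n + O(n^{-3/2} / √…)` transfers this
to `T_n`, up to an error `O(n^{-3/2})`, and letting `Im z → 0` gives the estimate on the real axis.
-/

lemma norm_inv_sub_ofReal_le {z : ℂ} (hz : 0 < z.im) (u : ℝ) : ‖(z - u)⁻¹‖ ≤ z.im⁻¹ := by
  rw [norm_inv]
  refine inv_anti₀ hz ?_
  simpa [abs_of_pos hz] using Complex.abs_im_le_norm (z - u)

lemma integrable_inv_sub_ofReal (ν : Measure ℝ) [IsFiniteMeasure ν] {z : ℂ} (hz : 0 < z.im) :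
    Integrable (fun u : ℝ => (z - u)⁻¹) ν := by
  have hne (u : ℝ) : z - u ≠ 0 := sub_ne_zero.2 fun h => by simp [h] at hz
  refine Integrable.mono' (integrable_const z.im⁻¹) ?_ (.of_forall (norm_inv_sub_ofReal_le hz))
  exact ((continuous_const.sub Complex.continuous_ofReal).inv₀ hne).aestronglyMeasurable

lemma sq_norm_inv (w : ℂ) : ‖w⁻¹‖ ^ 2 = (Complex.normSq w)⁻¹ := by
  rw [Complex.sq_norm, Complex.normSq_inv]

lemma integrable_inv_normSq_sub_ofReal (ν : Measure ℝ) [IsFiniteMeasure ν] {z : ℂ}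
    (hz : 0 < z.im) : Integrable (fun u : ℝ => (Complex.normSq (z - u))⁻¹) ν := by
  simp only [← sq_norm_inv]
  refine (integrable_const (z.im⁻¹ ^ 2)).mono'
    ((integrable_inv_sub_ofReal ν hz).aestronglyMeasurable.norm.pow 2) (.of_forall fun u => ?_)
  rw [norm_pow, norm_norm]
  exact pow_le_pow_left₀ (norm_nonneg _) (norm_inv_sub_ofReal_le hz u) 2

lemma im_cauchy (ν : Measure ℝ) [IsFiniteMeasure ν] {z : ℂ} (hz : 0 < z.im) :
    (cauchy ν z).im = -z.im * ∫ u, (Complex.normSq (z - u))⁻¹ ∂ν := by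
  have := Complex.imCLM.integral_comp_comm (integrable_inv_sub_ofReal ν hz)
  simp only [Complex.imCLM_apply] at this
  rw [cauchy, ← this, ← integral_const_mul]
  congr 1 with u
  simp [Complex.inv_im, div_eq_mul_inv]

lemma normSq_cauchy_le (ν : Measure ℝ) [IsProbabilityMeasure ν] {z : ℂ} (hz : 0 < z.im) :
    Complex.normSq (cauchy ν z) ≤ ∫ u, (Complex.normSq (z - u))⁻¹ ∂ν := by
  calc Complex.normSq (cauchy ν z) = ‖cauchy ν z‖ ^ 2 := (Complex.sq_norm _).symm
    _ ≤ (∫ u, ‖(z - u)⁻¹‖ ∂ν) ^ 2 :=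
        pow_le_pow_left₀ (norm_nonneg _) (norm_integral_le_integral_norm _) 2
    _ ≤ ∫ u, ‖(z - u)⁻¹‖ ^ 2 ∂ν :=
        (even_two.convexOn_pow (𝕜 := ℝ)).map_integral_le (continuous_pow 2).continuousOn
          isClosed_univ (.of_forall fun _ => mem_univ _) (integrable_inv_sub_ofReal ν hz).norm
          (by simpa only [Function.comp_def, sq_norm_inv] using integrable_inv_normSq_sub_ofReal ν hz)
    _ = ∫ u, (Complex.normSq (z - u))⁻¹ ∂ν := by simp only [sq_norm_inv]

lemma im_le_im_recip (ν : Measure ℝ) [IsProbabilityMeasure ν] {z : ℂ} (hz : 0 < z.im) :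
    z.im ≤ (recip ν z).im := by
  have hI : 0 < ∫ u, (Complex.normSq (z - u))⁻¹ ∂ν := by
    rw [integral_pos_iff_support_of_nonneg (fun u => inv_nonneg.2 (Complex.normSq_nonneg _))
      (integrable_inv_normSq_sub_ofReal ν hz)]
    have hsupp : Function.support (fun u : ℝ => (Complex.normSq (z - u))⁻¹) = univ :=
      eq_univ_of_forall fun u => by
        simpa [sub_eq_zero] using fun h : z = u => by simp [h] at hz
    simp [hsupp]
  have hG : 0 < Complex.normSq (cauchy ν z) := by
    refine Complex.normSq_pos.2 fun h => ?_
    have := im_cauchy ν hz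
    rw [h, Complex.zero_im] at this
    nlinarith
  rw [recip, Complex.inv_im, im_cauchy ν hz, le_div_iff₀ hG]
  nlinarith [normSq_cauchy_le ν hz]

lemma im_le_im_of_memF {F : ℂ → ℂ} (hF : MemF F) {z : ℂ} (hz : 0 < z.im) : z.im ≤ (F z).im := by
  obtain ⟨ν, hν, hFν⟩ := hF
  exact hFν z hz ▸ im_le_im_recip ν hz

lemma sqrt_mul_sqrt_le_im_of_sq_eq {s w : ℂ} {β δ e : ℝ}
    (hs : s ^ 2 = (β : ℂ) ^ 2 * w ^ 2 - 4 * δ) (he : e ^ 2 * δ = β ^ 2) (hδ : 0 ≤ δ)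
    (him : 0 ≤ s.im) : √δ * √(4 - (e * w.re) ^ 2) ≤ s.im := by
  have hre : s.re ^ 2 - s.im ^ 2 = β ^ 2 * (w.re ^ 2 - w.im ^ 2) - 4 * δ := by
    simpa [sq] using congrArg Complex.re hs
  rw [← Real.sqrt_mul hδ, ← Real.sqrt_sq him]
  exact Real.sqrt_le_sqrt (by nlinarith [sq_nonneg s.re, sq_nonneg (β * w.im)])

lemma four_sub_sq_le_norm (e : ℝ) (w : ℂ) : 4 - (e * w.re) ^ 2 ≤ ‖((e : ℂ) * w) ^ 2 - 4‖ := by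
  have hre : (((e : ℂ) * w) ^ 2 - 4).re = e ^ 2 * (w.re ^ 2 - w.im ^ 2) - 4 := by
    simp [sq]; ring
  calc 4 - (e * w.re) ^ 2 ≤ -(((e : ℂ) * w) ^ 2 - 4).re := by
        rw [hre]; nlinarith [sq_nonneg (e * w.im)]
    _ ≤ ‖((e : ℂ) * w) ^ 2 - 4‖ := (neg_le_abs _).trans (Complex.abs_re_le_norm _)

lemma four_sub_sq_pos {e h t : ℝ} (he : 0 < e) (hh : 0 < h) (ht : |t| ≤ 2 / e - h) :
    0 < 4 - (e * t) ^ 2 := by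
  have : |e * t| < 2 := by
    rw [abs_mul, abs_of_pos he]
    calc e * |t| ≤ e * (2 / e - h) := by gcongr
      _ < 2 := by rw [mul_sub, mul_div_cancel₀ _ he.ne']; nlinarith
  nlinarith [sq_abs (e * t), abs_nonneg (e * t)]

lemma norm_sub_le_of_le_norm_add {s₁ s₂ : ℂ} {m : ℝ} (hm : 0 < m) (h : m ≤ ‖s₁ + s₂‖) :
    ‖s₁ - s₂‖ ≤ ‖s₁ ^ 2 - s₂ ^ 2‖ / m := by
  rw [le_div_iff₀ hm, show s₁ ^ 2 - s₂ ^ 2 = (s₁ - s₂) * (s₁ + s₂) by ring, norm_mul]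
  gcongr

/-- `M z = a + ((1 + b) (z - a) + rootPart M a b z) / 2`, so this is the square root in the
formula for `M_n`. -/
def rootPart (M : ℂ → ℂ) (a b : ℝ) (z : ℂ) : ℂ := 2 * (M z - a) - (1 + b) * (z - a)

section rootPart

variable {M : ℂ → ℂ} {a b d e : ℝ}

lemma im_rootPart (z : ℂ) :
    (rootPart M a b z).im = 2 * (M z).im - (1 + b) * z.im := by
  simp [rootPart]

lemma sqrt_le_two_mul_im_rootPart {z : ℂ} (hz : 0 < z.im) (hM : z.im ≤ (M z).im)
    (hsq : rootPart M a b z ^ 2 = (1 - (b : ℂ)) ^ 2 * (z - a) ^ 2 - 4 * (1 - (d : ℂ)))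
    (hb : b < 1) (hd : d ≤ 3 / 4) (he : e ^ 2 * (1 - d) = (1 - b) ^ 2) :
    √(4 - (e * (z.re - a)) ^ 2) ≤ 2 * (rootPart M a b z).im := by
  have him : 0 ≤ (rootPart M a b z).im := by
    rw [im_rootPart]; nlinarith
  have hroot := sqrt_mul_sqrt_le_im_of_sq_eq (w := z - a) (by push_cast; exact hsq) he
    (by linarith) him
  have hhalf : 1 / 2 ≤ √(1 - d) :=
    Real.le_sqrt_of_sq_le (by linarith)
  simp only [Complex.sub_re, Complex.ofReal_re] at hroot
  nlinarith [Real.sqrt_nonneg (4 - (e * (z.re - a)) ^ 2)]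

lemma norm_sub_le_mul_div_min_sqrt {z₁ z₂ : ℂ} (hz₁ : 0 < z₁.im) (hz₂ : 0 < z₂.im)
    (hM : ∀ z : ℂ, 0 < z.im → z.im ≤ (M z).im)
    (hsq : ∀ z : ℂ, 0 < z.im →
      rootPart M a b z ^ 2 = (1 - (b : ℂ)) ^ 2 * (z - a) ^ 2 - 4 * (1 - (d : ℂ)))
    (hb : |b| ≤ 1 / 2) (hd : d ≤ 3 / 4) (he : e ^ 2 * (1 - d) = (1 - b) ^ 2)
    (ha₁ : ‖z₁ - a‖ ≤ 7) (ha₂ : ‖z₂ - a‖ ≤ 7)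
    (hm₁ : 0 < 4 - (e * (z₁.re - a)) ^ 2) (hm₂ : 0 < 4 - (e * (z₂.re - a)) ^ 2) :
    ‖M z₁ - M z₂‖ ≤
      18 * ‖z₁ - z₂‖ / min √(4 - (e * (z₁.re - a)) ^ 2) √(4 - (e * (z₂.re - a)) ^ 2) := by
  obtain ⟨hb₀, hb₁⟩ := abs_le.1 hb
  set m := min √(4 - (e * (z₁.re - a)) ^ 2) √(4 - (e * (z₂.re - a)) ^ 2)
  set s₁ := rootPart M a b z₁
  set s₂ := rootPart M a b z₂
  have hm : 0 < m := lt_min (Real.sqrt_pos.2 hm₁) (Real.sqrt_pos.2 hm₂)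
  have hm_le₁ : m ≤ √(4 - (e * (z₁.re - a)) ^ 2) := min_le_left _ _
  have hm_le₂ : m ≤ √(4 - (e * (z₂.re - a)) ^ 2) := min_le_right _ _
  have hm2 : m ≤ 2 := hm_le₁.trans <| Real.sqrt_le_iff.2
    ⟨zero_le_two, by nlinarith [sq_nonneg (e * (z₁.re - a))]⟩
  have hsum : m ≤ ‖s₁ + s₂‖ := by
    have h₁ := sqrt_le_two_mul_im_rootPart hz₁ (hM z₁ hz₁) (hsq z₁ hz₁) (by linarith) hd he
    have h₂ := sqrt_le_two_mul_im_rootPart hz₂ (hM z₂ hz₂) (hsq z₂ hz₂) (by linarith) hd he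
    calc m ≤ (s₁ + s₂).im := by rw [Complex.add_im]; linarith
      _ ≤ ‖s₁ + s₂‖ := (le_abs_self _).trans (Complex.abs_im_le_norm _)
  have hsq_sub : ‖s₁ ^ 2 - s₂ ^ 2‖ ≤ 32 * ‖z₁ - z₂‖ := by
    have hfac : s₁ ^ 2 - s₂ ^ 2 = (1 - (b : ℂ)) ^ 2 * (z₁ - z₂) * ((z₁ - a) + (z₂ - a)) := by
      rw [hsq z₁ hz₁, hsq z₂ hz₂]; ring
    have hb2 : ‖(1 - (b : ℂ)) ^ 2‖ ≤ 9 / 4 := by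
      rw [norm_pow, show (1 - (b : ℂ)) = ((1 - b : ℝ) : ℂ) by push_cast; rfl, Complex.norm_real,
        Real.norm_eq_abs, sq_abs]
      nlinarith
    have hsum_a : ‖(z₁ - a) + (z₂ - a)‖ ≤ 14 := (norm_add_le _ _).trans (by linarith)
    rw [hfac, norm_mul, norm_mul]
    calc _ ≤ 9 / 4 * ‖z₁ - z₂‖ * 14 := by gcongr
      _ ≤ 32 * ‖z₁ - z₂‖ := by nlinarith [norm_nonneg (z₁ - z₂)]
  have hs_sub : ‖s₁ - s₂‖ ≤ 32 * (‖z₁ - z₂‖ / m) :=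
    (norm_sub_le_of_le_norm_add hm hsum).trans (by rw [← mul_div_assoc]; gcongr)
  have hlin : ‖(1 + (b : ℂ)) * (z₁ - z₂)‖ ≤ 3 * (‖z₁ - z₂‖ / m) := by
    rw [norm_mul, show (1 + (b : ℂ)) = ((1 + b : ℝ) : ℂ) by push_cast; rfl, Complex.norm_real,
      Real.norm_eq_abs]
    have hx : ‖z₁ - z₂‖ ≤ 2 * (‖z₁ - z₂‖ / m) := by
      rw [mul_div_assoc', le_div_iff₀ hm]; nlinarith [norm_nonneg (z₁ - z₂)]
    nlinarith [abs_le.2 (⟨by linarith, by linarith⟩ : -(3 / 2) ≤ 1 + b ∧ 1 + b ≤ 3 / 2),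
      norm_nonneg (z₁ - z₂)]
  have hM_sub : M z₁ - M z₂ = ((1 + b) * (z₁ - z₂) + (s₁ - s₂)) / 2 := by
    simp only [s₁, s₂, rootPart]; ring
  rw [hM_sub, norm_div, Complex.norm_two, mul_div_assoc]
  linarith [norm_add_le ((1 + (b : ℂ)) * (z₁ - z₂)) (s₁ - s₂), div_nonneg (norm_nonneg (z₁ - z₂)) hm.le]

lemma norm_sub_le_of_norm_sub_le_div_sqrt {T : ℂ → ℂ} {R K x₁ x₂ ε : ℝ}
    (hM : ∀ z : ℂ, 0 < z.im → z.im ≤ (M z).im)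
    (hsq : ∀ z : ℂ, 0 < z.im →
      rootPart M a b z ^ 2 = (1 - (b : ℂ)) ^ 2 * (z - a) ^ 2 - 4 * (1 - (d : ℂ)))
    (hb : |b| ≤ 1 / 2) (hd : d ≤ 3 / 4) (he : e ^ 2 * (1 - d) = (1 - b) ^ 2)
    (hTM : ∀ z : ℂ, 0 < z.im → z.im ≤ 1 → |z.re - a| ≤ R →
      ‖T z - M z‖ ≤ K / √‖((e : ℂ) * (z - a)) ^ 2 - 4‖)
    (hK : 0 ≤ K) (hR : R ≤ 6) (hx₁ : |x₁ - a| ≤ R) (hx₂ : |x₂ - a| ≤ R)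
    (hm₁ : 0 < 4 - (e * (x₁ - a)) ^ 2) (hm₂ : 0 < 4 - (e * (x₂ - a)) ^ 2)
    (hε : 0 < ε) (hε1 : ε ≤ 1) :
    ‖T (x₁ + ε * I) - T (x₂ + ε * I)‖ ≤
      (18 * |x₁ - x₂| + 2 * K) / min √(4 - (e * (x₁ - a)) ^ 2) √(4 - (e * (x₂ - a)) ^ 2) := by
  set m := min √(4 - (e * (x₁ - a)) ^ 2) √(4 - (e * (x₂ - a)) ^ 2)
  have hm : 0 < m := lt_min (Real.sqrt_pos.2 hm₁) (Real.sqrt_pos.2 hm₂)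
  have hre (x : ℝ) : ((x : ℂ) + ε * I).re = x := by simp
  have him (x : ℝ) : ((x : ℂ) + ε * I).im = ε := by simp
  have hnorm_a (x : ℝ) (hx : |x - a| ≤ R) : ‖(x + ε * I) - (a : ℂ)‖ ≤ 7 := by
    calc ‖(x + ε * I) - (a : ℂ)‖ = ‖((x - a : ℝ) : ℂ) + ε * I‖ := by push_cast; ring_nf
      _ ≤ ‖((x - a : ℝ) : ℂ)‖ + ‖(ε : ℂ) * I‖ := norm_add_le _ _
      _ = |x - a| + ε := by
          rw [Complex.norm_real, norm_mul, Complex.norm_I, mul_one, Complex.norm_real,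
            Real.norm_eq_abs, Real.norm_eq_abs, abs_of_pos hε]
      _ ≤ 7 := by linarith
  have hTM' (x : ℝ) (hx : |x - a| ≤ R) (hmx : m ≤ √(4 - (e * (x - a)) ^ 2)) :
      ‖T (x + ε * I) - M (x + ε * I)‖ ≤ K / m := by
    refine (hTM _ (by rw [him]; exact hε) (by rw [him]; exact hε1) (by rw [hre]; exact hx)).trans ?_
    refine div_le_div_of_nonneg_left hK hm (hmx.trans (Real.sqrt_le_sqrt ?_))
    simpa using four_sub_sq_le_norm e ((x + ε * I) - (a : ℂ))
  have hMM := norm_sub_le_mul_div_min_sqrt (z₁ := x₁ + ε * I) (z₂ := x₂ + ε * I)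
    (by rw [him]; exact hε) (by rw [him]; exact hε) hM hsq hb hd he
    (hnorm_a x₁ hx₁) (hnorm_a x₂ hx₂) (by rwa [hre]) (by rwa [hre])
  rw [hre, hre, show (x₁ : ℂ) + ε * I - (x₂ + ε * I) = ((x₁ - x₂ : ℝ) : ℂ) by push_cast; ring,
    Complex.norm_real, Real.norm_eq_abs] at hMM
  set z₁ : ℂ := x₁ + ε * I
  set z₂ : ℂ := x₂ + ε * I
  calc ‖T z₁ - T z₂‖ ≤ ‖T z₁ - M z₁‖ + ‖M z₁ - M z₂‖ + ‖T z₂ - M z₂‖ := by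
        linarith [norm_sub_le_norm_sub_add_norm_sub (T z₁) (M z₁) (T z₂),
          norm_sub_le_norm_sub_add_norm_sub (M z₁) (M z₂) (T z₂), norm_sub_rev (M z₂) (T z₂)]
    _ ≤ K / m + 18 * |x₁ - x₂| / m + K / m :=
        add_le_add (add_le_add (hTM' x₁ hx₁ (min_le_left _ _)) hMM)
          (hTM' x₂ hx₂ (min_le_right _ _))
    _ = (18 * |x₁ - x₂| + 2 * K) / m := by ring

end rootPart

lemma norm_sub_le_of_forall_add_mul_I {E : Type*} [NormedAddCommGroup E] {f : ℂ → E}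
    (hf : ContinuousOn f {z : ℂ | 0 ≤ z.im}) (x₁ x₂ : ℝ) {C : ℝ}
    (h : ∀ ε ∈ Ioc (0 : ℝ) 1, ‖f (x₁ + ε * I) - f (x₂ + ε * I)‖ ≤ C) :
    ‖f x₁ - f x₂‖ ≤ C := by
  have hlim (x : ℝ) : Tendsto (fun ε : ℝ => f (x + ε * I)) (𝓝[>] 0) (𝓝 (f x)) := by
    refine (hf x (by simp)).tendsto.comp (tendsto_nhdsWithin_iff.2 ⟨?_, ?_⟩)
    · exact (Continuous.tendsto' (by fun_prop) 0 _ (by simp)).mono_left nhdsWithin_le_nhds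
    · filter_upwards [self_mem_nhdsWithin] with ε (hε : 0 < ε)
      simpa using hε.le
  refine le_of_tendsto (((hlim x₁).sub (hlim x₂)).norm) ?_
  filter_upwards [Ioc_mem_nhdsGT zero_lt_one] with ε hε using h ε hε

section parameters

variable (μ : Measure ℝ)

lemma tendsto_bQ : Tendsto (bQ μ) atTop (𝓝 0) :=
  tendsto_const_div_atTop_nhds_zero_nat _

lemma tendsto_dQ : Tendsto (dQ μ) atTop (𝓝 0) :=
  tendsto_const_div_atTop_nhds_zero_nat _

lemma tendsto_eQ : Tendsto (eQ μ) atTop (𝓝 1) := by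
  have := ((tendsto_const_nhds (x := (1 : ℝ))).sub (tendsto_bQ μ)).div
    ((tendsto_const_nhds (x := (1 : ℝ))).sub (tendsto_dQ μ)).sqrt (by norm_num)
  simp only [sub_zero, Real.sqrt_one, div_one] at this
  exact this

lemma eQ_sq_mul {n : ℕ} (hd : dQ μ n < 1) : eQ μ n ^ 2 * (1 - dQ μ n) = (1 - bQ μ n) ^ 2 := by
  rw [eQ, div_pow, Real.sq_sqrt (by linarith), div_mul_cancel₀ _ (by linarith)]

lemma eventually_abs_bQ_le_dQ_le_eQ_ge :
    ∀ᶠ n in atTop, |bQ μ n| ≤ 1 / 2 ∧ dQ μ n ≤ 3 / 4 ∧ 1 / 3 ≤ eQ μ n := by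
  refine ((tendsto_bQ μ).abs.eventually_le_const ?_).and
    (((tendsto_dQ μ).eventually_le_const ?_).and ((tendsto_eQ μ).eventually_const_le ?_)) <;>
  norm_num

end parameters

theorem stmt_17_general
    (μ : Measure ℝ)
    (W : ℕ → ℂ → ℂ)
    (M : ℕ → ℂ → ℂ)
    (hMF : ∀ᶠ n in atTop, MemF (M n))
    (hMeq : ∀ᶠ n in atTop, ∀ z : ℂ, 0 < z.im →
      (2 * (M n z - (aQ μ n : ℂ)) - (1 + (bQ μ n : ℂ)) * (z - (aQ μ n : ℂ))) ^ 2
        = (1 - (bQ μ n : ℂ)) ^ 2 * (z - (aQ μ n : ℂ)) ^ 2 - 4 * (1 - (dQ μ n : ℂ)))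
    (c₂ : ℝ) (hc₂ : 0 < c₂)
    (hexp : ∃ c' : ℝ, 0 < c' ∧ ∀ᶠ n in atTop, ∀ z : ℂ,
      0 < z.im → z.im ≤ 3 → |z.re - aQ μ n| ≤ 2 / eQ μ n - c₂ * (n : ℝ) ^ (-(3 / 2) : ℝ) →
      ‖Tfun W n z - M n z‖
        ≤ c' / ((n : ℝ) ^ ((3 : ℝ) / 2) *
            Real.sqrt ‖((eQ μ n : ℂ) * (z - (aQ μ n : ℂ))) ^ 2 - 4‖))
    (Tb : ℕ → ℂ → ℂ)
    (hTb : ∀ᶠ n in atTop, ContinuousOn (Tb n) {z : ℂ | 0 ≤ z.im} ∧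
      ∀ z : ℂ, 0 < z.im → Tb n z = Tfun W n z) :
    ∃ c : ℝ, 0 < c ∧ ∃ n₁ : ℕ, ∀ n : ℕ, n₁ ≤ n → ∀ x₁ x₂ : ℝ,
      |x₁ - aQ μ n| ≤ 2 / eQ μ n - c₂ * (n : ℝ) ^ (-(3 / 2) : ℝ) →
      |x₂ - aQ μ n| ≤ 2 / eQ μ n - c₂ * (n : ℝ) ^ (-(3 / 2) : ℝ) →
      ‖Tb n (x₁ : ℂ) - Tb n (x₂ : ℂ)‖
        ≤ c * (|x₁ - x₂| + (n : ℝ) ^ (-(3 / 2) : ℝ)) /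
            min (Real.sqrt (4 - (eQ μ n * (x₁ - aQ μ n)) ^ 2))
              (Real.sqrt (4 - (eQ μ n * (x₂ - aQ μ n)) ^ 2)) := by
  obtain ⟨c', hc', hexp⟩ := hexp
  obtain ⟨n₁, hn₁⟩ := eventually_atTop.1 ((eventually_abs_bQ_le_dQ_le_eQ_ge μ).and
    (hMF.and (hMeq.and (hexp.and (hTb.and (eventually_gt_atTop 0))))))
  refine ⟨18 + 2 * c', by positivity, n₁, fun n hn x₁ x₂ hx₁ hx₂ => ?_⟩
  obtain ⟨⟨hb, hd, he⟩, hMF, hMeq, hexp, ⟨hTbc, hTb⟩, hn⟩ := hn₁ n hn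
  set p := (n : ℝ) ^ (-(3 / 2) : ℝ) with hp_def
  have hp : 0 < p := by positivity
  have hR : 2 / eQ μ n - c₂ * p ≤ 6 := by
    have : 2 / eQ μ n ≤ 6 := by rw [div_le_iff₀ (by linarith)]; linarith
    nlinarith
  have hTM (z : ℂ) (hz : 0 < z.im) (hz1 : z.im ≤ 1) (hzR : |z.re - aQ μ n| ≤ 2 / eQ μ n - c₂ * p) :
      ‖Tfun W n z - M n z‖ ≤ c' * p / √‖((eQ μ n : ℂ) * (z - aQ μ n)) ^ 2 - 4‖ := by
    rw [hp_def, Real.rpow_neg (Nat.cast_nonneg n), ← div_eq_mul_inv, div_div]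
    exact hexp z hz (hz1.trans (by norm_num)) hzR
  have hpos (x : ℝ) (hx : |x - aQ μ n| ≤ 2 / eQ μ n - c₂ * p) :
      0 < 4 - (eQ μ n * (x - aQ μ n)) ^ 2 :=
    four_sub_sq_pos (by linarith) (mul_pos hc₂ hp) hx
  calc ‖Tb n x₁ - Tb n x₂‖
      ≤ (18 * |x₁ - x₂| + 2 * (c' * p)) /
          min √(4 - (eQ μ n * (x₁ - aQ μ n)) ^ 2) √(4 - (eQ μ n * (x₂ - aQ μ n)) ^ 2) :=
        norm_sub_le_of_forall_add_mul_I hTbc x₁ x₂ fun ε ⟨hε, hε1⟩ => by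
          rw [hTb _ (by simpa using hε), hTb _ (by simpa using hε)]
          exact norm_sub_le_of_norm_sub_le_div_sqrt (fun z hz => im_le_im_of_memF hMF hz) hMeq
            hb hd (eQ_sq_mul μ (by linarith)) hTM (by positivity) hR hx₁ hx₂ (hpos x₁ hx₁)
            (hpos x₂ hx₂) hε hε1
    _ ≤ (18 + 2 * c') * (|x₁ - x₂| + p) /
          min √(4 - (eQ μ n * (x₁ - aQ μ n)) ^ 2) √(4 - (eQ μ n * (x₂ - aQ μ n)) ^ 2) := by
        gcongr
        nlinarith [abs_nonneg (x₁ - x₂)]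

theorem stmt_17
    (μ : Measure ℝ) [IsProbabilityMeasure μ]
    (h8 : Integrable (fun u => u ^ 8) μ)
    (h1 : mom μ 1 = 0) (h2 : mom μ 2 = 1)
    (τ : Measure ℝ) [IsProbabilityMeasure τ]
    (hτ : ∀ z : ℂ, 0 < z.im → recip μ z = z + ∫ u, ((u : ℂ) - z)⁻¹ ∂τ)
    (μs : ℕ → Measure ℝ) (hμsP : ∀ n : ℕ, IsProbabilityMeasure (μs n))
    (hμs : ∀ n : ℕ, ∀ z : ℂ, 0 < z.im →
      recip (μs n) z = z + ∫ u in truncSet n, ((u : ℂ) - z)⁻¹ ∂τ)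
    (W : ℕ → ℂ → ℂ) (νs : ℕ → Measure ℝ)
    (hboxW : ∀ n : ℕ, 1 ≤ n → IsBoxPow (μs n) n (W n) (νs n))
    (M : ℕ → ℂ → ℂ)
    (hMF : ∀ᶠ n in atTop, MemF (M n))
    (hMeq : ∀ᶠ n in atTop, ∀ z : ℂ, 0 < z.im →
      (2 * (M n z - (aQ μ n : ℂ)) - (1 + (bQ μ n : ℂ)) * (z - (aQ μ n : ℂ))) ^ 2
        = (1 - (bQ μ n : ℂ)) ^ 2 * (z - (aQ μ n : ℂ)) ^ 2 - 4 * (1 - (dQ μ n : ℂ)))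
    (c₂ : ℝ) (hc₂ : 0 < c₂)
    (hexp : ∃ c' : ℝ, 0 < c' ∧ ∀ᶠ n in atTop, ∀ z : ℂ,
      0 < z.im → z.im ≤ 3 → |z.re - aQ μ n| ≤ 2 / eQ μ n - c₂ * (n : ℝ) ^ (-(3 / 2) : ℝ) →
      ‖Tfun W n z - M n z‖
        ≤ c' / ((n : ℝ) ^ ((3 : ℝ) / 2) *
            Real.sqrt ‖((eQ μ n : ℂ) * (z - (aQ μ n : ℂ))) ^ 2 - 4‖))
    (Tb : ℕ → ℂ → ℂ)
    (hTb : ∀ᶠ n in atTop, ContinuousOn (Tb n) {z : ℂ | 0 ≤ z.im} ∧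
      ∀ z : ℂ, 0 < z.im → Tb n z = Tfun W n z) :
    ∃ c : ℝ, 0 < c ∧ ∃ n₁ : ℕ, ∀ n : ℕ, n₁ ≤ n → ∀ x₁ x₂ : ℝ,
      |x₁ - aQ μ n| ≤ 2 / eQ μ n - c₂ * (n : ℝ) ^ (-(3 / 2) : ℝ) →
      |x₂ - aQ μ n| ≤ 2 / eQ μ n - c₂ * (n : ℝ) ^ (-(3 / 2) : ℝ) →
      ‖Tb n (x₁ : ℂ) - Tb n (x₂ : ℂ)‖
        ≤ c * (|x₁ - x₂| + (n : ℝ) ^ (-(3 / 2) : ℝ)) /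
            min (Real.sqrt (4 - (eQ μ n * (x₁ - aQ μ n)) ^ 2))
              (Real.sqrt (4 - (eQ μ n * (x₂ - aQ μ n)) ^ 2)) :=
  stmt_17_general μ W M hMF hMeq c₂ hc₂ hexp Tb hTb

end FreeCLT
end
end
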